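/- Let X and Z denote the 2×2 Pauli matrices X = [[0,1],[1,0]] and Z = [[1,0],[0,−1]], and let α, β be real numbers. Then every separable state σ on ℂ² ⊗ ℂ² satisfies −max(|α|, |β|) ≤ α·Tr((X⊗X)σ) + β·Tr((Z⊗Z)σ) ≤ max(|α|, |β|). Consequently any two-qubit density matrix ρ with |α·Tr((X⊗X)ρ) + β·Tr((Z⊗Z)ρ)| > max(|α|,|β|) is entangled (not separable). -/

import Mathlib

open Matrix
open Kronecker
open scoped BigOperators ComplexOrder

/-- The Pauli matrix `X`. -/
def PauliX : Matrix (Fin 2) (Fin 2) ℂ := !![0, 1; 1, 0]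

/-- The Pauli matrix `Y`. -/
def PauliY : Matrix (Fin 2) (Fin 2) ℂ := !![0, -Complex.I; Complex.I, 0]

/-- The Pauli matrix `Z`. -/
def PauliZ : Matrix (Fin 2) (Fin 2) ℂ := !![1, 0; 0, -1]

/-- A density matrix: Hermitian, positive semidefinite, trace one. -/
def IsDensityMatrix {n : Type*} [Fintype n] (ρ : Matrix n n ℂ) : Prop :=
  ρ.IsHermitian ∧ ρ.PosSemidef ∧ ρ.trace = 1

/-- A separable state on `ℂ² ⊗ ℂ²`: a finite convex combination of Kronecker
products of 2×2 density matrices. -/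
def IsSeparableState (σ : Matrix (Fin 2 × Fin 2) (Fin 2 × Fin 2) ℂ) : Prop :=
  ∃ (m : ℕ) (p : Fin m → ℝ) (ρA ρB : Fin m → Matrix (Fin 2) (Fin 2) ℂ),
    (∀ k, 0 ≤ p k) ∧ (∑ k, p k = 1) ∧
    (∀ k, IsDensityMatrix (ρA k)) ∧ (∀ k, IsDensityMatrix (ρB k)) ∧
    σ = ∑ k, (p k : ℂ) • (ρA k ⊗ₖ ρB k)


/-!
Positivity of `det ρ` puts the Bloch components `(tr Xρ, tr Zρ)` of a qubit state in the unit
disc. On a product state the observable `α X⊗X + β Z⊗Z` therefore has expectation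
`α x x' + β z z'`, and `|x x'| + |z z'| ≤ (x² + z² + x'² + z'²) / 2 ≤ 1` bounds it by
`max |α| |β|`. Expectations in separable states are convex combinations of these.
-/

section Bloch

variable (ρ : Matrix (Fin 2) (Fin 2) ℂ)

lemma trace_pauliX_mul : (PauliX * ρ).trace = ρ 0 1 + ρ 1 0 := by
  simp [PauliX, Matrix.trace_fin_two, Matrix.vecMul, dotProduct, add_comm]

lemma trace_pauliZ_mul : (PauliZ * ρ).trace = ρ 0 0 - ρ 1 1 := by
  simp [PauliZ, Matrix.trace_fin_two, Matrix.vecMul, dotProduct, sub_eq_add_neg]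

variable {ρ}

lemma IsDensityMatrix.exists_bloch_xz_sq_add_sq_le_one (h : IsDensityMatrix ρ) :
    ∃ x z : ℝ, (PauliX * ρ).trace = x ∧ (PauliZ * ρ).trace = z ∧ x ^ 2 + z ^ 2 ≤ 1 := by
  obtain ⟨hH, hP, hT⟩ := h
  set a := (ρ 0 0).re
  set d := (ρ 1 1).re
  have h10 : ρ 1 0 = star (ρ 0 1) := (hH.apply 1 0).symm
  have h00 : ρ 0 0 = a := (Complex.conj_eq_iff_re.mp (hH.apply 0 0)).symm
  have h11 : ρ 1 1 = d := (Complex.conj_eq_iff_re.mp (hH.apply 1 1)).symm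
  have htr : a + d = 1 := by
    simpa [Matrix.trace_fin_two] using congrArg Complex.re hT
  -- `det ρ = a d - |ρ₀₁|² ≥ 0`, and `x² + z² ≤ 4 |ρ₀₁|² + (a - d)² ≤ (a + d)² = 1`
  have hdet : Complex.normSq (ρ 0 1) ≤ a * d := by
    have := (Complex.le_def.mp hP.det_nonneg).1
    rw [Matrix.det_fin_two, h10, h00, h11] at this
    simpa [Complex.mul_re, Complex.normSq_apply] using this
  refine ⟨2 * (ρ 0 1).re, a - d, ?_, ?_, ?_⟩
  · rw [trace_pauliX_mul, h10, Complex.star_def, Complex.add_conj]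
  · rw [trace_pauliZ_mul, h00, h11]; push_cast; ring
  · nlinarith [Complex.normSq_apply (ρ 0 1), sq_nonneg (ρ 0 1).im]

end Bloch

lemma abs_mul_add_mul_le_max_of_sq_add_sq_le_one {α β x z x' z' : ℝ}
    (h : x ^ 2 + z ^ 2 ≤ 1) (h' : x' ^ 2 + z' ^ 2 ≤ 1) :
    |α * (x * x') + β * (z * z')| ≤ max |α| |β| := by
  have hx : |x * x'| ≤ (x ^ 2 + x' ^ 2) / 2 := by
    rw [abs_mul]; nlinarith [sq_nonneg (|x| - |x'|), sq_abs x, sq_abs x']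
  have hz : |z * z'| ≤ (z ^ 2 + z' ^ 2) / 2 := by
    rw [abs_mul]; nlinarith [sq_nonneg (|z| - |z'|), sq_abs z, sq_abs z']
  calc |α * (x * x') + β * (z * z')|
      ≤ |α| * |x * x'| + |β| * |z * z'| := by
        simpa only [abs_mul α, abs_mul β] using abs_add_le (α * (x * x')) (β * (z * z'))
    _ ≤ max |α| |β| * (|x * x'| + |z * z'|) := by
        rw [mul_add]; gcongr <;> simp
    _ ≤ max |α| |β| * 1 := by gcongr; linarith
    _ = max |α| |β| := mul_one _

lemma abs_sum_mul_le_of_abs_le {ι : Type*} {s : Finset ι} {p f : ι → ℝ} {M : ℝ}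
    (hp : ∀ i ∈ s, 0 ≤ p i) (hp1 : ∑ i ∈ s, p i = 1) (hf : ∀ i ∈ s, |f i| ≤ M) :
    |∑ i ∈ s, p i * f i| ≤ M := by
  calc |∑ i ∈ s, p i * f i| ≤ ∑ i ∈ s, p i * |f i| := by
        refine (Finset.abs_sum_le_sum_abs _ _).trans_eq (Finset.sum_congr rfl fun i hi => ?_)
        rw [abs_mul, abs_of_nonneg (hp i hi)]
    _ ≤ ∑ i ∈ s, p i * M :=
        Finset.sum_le_sum fun i hi => mul_le_mul_of_nonneg_left (hf i hi) (hp i hi)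
    _ = M := by rw [← Finset.sum_mul, hp1, one_mul]

lemma trace_kronecker_mul_sum_smul_kronecker {ι m n R : Type*} [Fintype m] [Fintype n]
    [CommSemiring R] (s : Finset ι) (c : ι → R) (P : Matrix m m R) (Q : Matrix n n R)
    (A : ι → Matrix m m R) (B : ι → Matrix n n R) :
    ((P ⊗ₖ Q) * ∑ i ∈ s, c i • (A i ⊗ₖ B i)).trace
      = ∑ i ∈ s, c i * ((P * A i).trace * (Q * B i).trace) := by
  simp only [Matrix.mul_sum, Matrix.trace_sum, Matrix.mul_smul, Matrix.trace_smul,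
    ← Matrix.mul_kronecker_mul, Matrix.trace_kronecker, smul_eq_mul]

lemma IsSeparableState.exists_real_abs_le {σ : Matrix (Fin 2 × Fin 2) (Fin 2 × Fin 2) ℂ}
    (hσ : IsSeparableState σ) (α β : ℝ) :
    ∃ r : ℝ, (α : ℂ) * ((PauliX ⊗ₖ PauliX) * σ).trace
        + (β : ℂ) * ((PauliZ ⊗ₖ PauliZ) * σ).trace = r ∧ |r| ≤ max |α| |β| := by
  obtain ⟨m, p, ρA, ρB, hp, hp1, hA, hB, rfl⟩ := hσ
  choose xA zA hxA hzA hA using fun k => (hA k).exists_bloch_xz_sq_add_sq_le_one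
  choose xB zB hxB hzB hB using fun k => (hB k).exists_bloch_xz_sq_add_sq_le_one
  refine ⟨∑ k, p k * (α * (xA k * xB k) + β * (zA k * zB k)), ?_,
    abs_sum_mul_le_of_abs_le (fun k _ => hp k) hp1 fun k _ =>
      abs_mul_add_mul_le_max_of_sq_add_sq_le_one (hA k) (hB k)⟩
  rw [trace_kronecker_mul_sum_smul_kronecker, trace_kronecker_mul_sum_smul_kronecker]
  simp only [hxA, hxB, hzA, hzB, Finset.mul_sum, ← Finset.sum_add_distrib]
  push_cast
  exact Finset.sum_congr rfl fun k _ => by ring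

/-- For real `α, β`, every separable two-qubit state `σ` satisfies
`−max(|α|,|β|) ≤ α⟨X⊗X⟩_σ + β⟨Z⊗Z⟩_σ ≤ max(|α|,|β|)`; consequently any density
matrix `ρ` with `|α⟨X⊗X⟩_ρ + β⟨Z⊗Z⟩_ρ| > max(|α|,|β|)` is not separable. -/
theorem stmt6 (α β : ℝ) :
    (∀ σ : Matrix (Fin 2 × Fin 2) (Fin 2 × Fin 2) ℂ, IsSeparableState σ →
      ∃ r : ℝ,
        (α : ℂ) * ((PauliX ⊗ₖ PauliX) * σ).trace
          + (β : ℂ) * ((PauliZ ⊗ₖ PauliZ) * σ).trace = (r : ℂ) ∧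
        -max |α| |β| ≤ r ∧ r ≤ max |α| |β|) ∧
    (∀ ρ : Matrix (Fin 2 × Fin 2) (Fin 2 × Fin 2) ℂ, IsDensityMatrix ρ →
      max |α| |β| <
        ‖(α : ℂ) * ((PauliX ⊗ₖ PauliX) * ρ).trace
          + (β : ℂ) * ((PauliZ ⊗ₖ PauliZ) * ρ).trace‖ →
      ¬ IsSeparableState ρ) := by
  refine ⟨fun σ hσ => ?_, fun ρ _ hlt hρ => ?_⟩
  · obtain ⟨r, hr, hle⟩ := hσ.exists_real_abs_le α β
    exact ⟨r, hr, abs_le.mp hle⟩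
  · obtain ⟨r, hr, hle⟩ := hρ.exists_real_abs_le α β
    rw [hr, Complex.norm_real, Real.norm_eq_abs] at hlt
    exact hle.not_gt hlt
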